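/- arXiv:1105.6330 — 5 statements merged into one kernel-verified Lean document; each statement's English description precedes it below -/
import Mathlib

section
/- Let p ≥ 2, q = p/(p−1), δ = q(q−1)/8 and n ∈ ℕ. The Nazarov–Treil Bellman function Q(ζ,η) = (1/2)β(|ζ|,|η|) is continuously differentiable (of class C¹) on ℝ × ℝⁿ. -/
/-!
Write `β(u, v) = u^p + v^q + δ γ(u, v)` with `γ = u² v^(2-q)` on `{u^p ≤ v^q}` and
`γ = (2/p) u^p + (2/q - 1) v^q` on `{v^q ≤ u^p}`. Since `p, q > 1`, the terms `‖ζ‖^p`, `‖η‖^q` and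
the second branch of `γ` are `C¹`. On the interface `u^p = v^q` one has `u = v^(q-1)`, and
`pq = p + q` makes the values and the derivatives of the two branches agree there, so `γ` is `C¹`
once its first branch is `C¹` up to the boundary of its closed region. This is clear where
`η ≠ 0`. The only point of the region with `η = 0` is the origin, where
`‖ζ‖² ‖η‖^(2-q) = O(‖(ζ, η)‖²)`, and inside the region `u ≤ v^(q-1)` bounds the derivative
by `2v + (2-q)u`.
-/

open Real

/-- The Nazarov–Treil Bellman auxiliary function `β`. -/
noncomputable def bell (p : ℝ) (u v : ℝ) : ℝ :=
  if u ^ p ≤ v ^ (p / (p - 1)) then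
    u ^ p + v ^ (p / (p - 1)) +
      (p / (p - 1)) * (p / (p - 1) - 1) / 8 * (u ^ (2 : ℝ) * v ^ (2 - p / (p - 1)))
  else
    u ^ p + v ^ (p / (p - 1)) +
      (p / (p - 1)) * (p / (p - 1) - 1) / 8 *
        ((2 / p) * u ^ p + (2 / (p / (p - 1)) - 1) * v ^ (p / (p - 1)))

/-- The Nazarov–Treil Bellman function `Q(ζ,η) = (1/2) β(|ζ|,|η|)` on `ℝ × ℝⁿ`. -/
noncomputable def bellQ (p : ℝ) (n : ℕ) (ξ : ℝ × EuclideanSpace ℝ (Fin n)) : ℝ :=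
  (1 / 2) * bell p |ξ.1| ‖ξ.2‖

open Set Asymptotics

section Gluing

variable {𝕜 X G : Type*} [NontriviallyNormedField 𝕜] [NormedAddCommGroup X] [NormedSpace 𝕜 X]
  [NormedAddCommGroup G] [NormedSpace 𝕜 G]

theorem contDiff_one_if_le {u v : X → ℝ} (hu : Continuous u) (hv : Continuous v)
    {f g : X → G} {f' g' : X → X →L[𝕜] G}
    (hf : ∀ x, u x ≤ v x → HasFDerivWithinAt f (f' x) {y | u y ≤ v y} x)
    (hg : ∀ x, v x ≤ u x → HasFDerivWithinAt g (g' x) {y | v y ≤ u y} x)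
    (hf' : ContinuousOn f' {y | u y ≤ v y}) (hg' : ContinuousOn g' {y | v y ≤ u y})
    (hfg : ∀ x, u x = v x → f x = g x) (hfg' : ∀ x, u x = v x → f' x = g' x) :
    ContDiff 𝕜 1 fun x ↦ if u x ≤ v x then f x else g x := by
  refine contDiff_one_iff_hasFDerivAt.2
    ⟨fun x ↦ if u x ≤ v x then f' x else g' x, continuous_if_le hu hv hf' hg' hfg', fun x ↦ ?_⟩
  have hs : HasFDerivWithinAt (fun x ↦ if u x ≤ v x then f x else g x)
      (if u x ≤ v x then f' x else g' x) {y | u y ≤ v y} x := by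
    by_cases hx : u x ≤ v x
    · rw [if_pos hx]
      exact (hf x hx).congr (fun y hy ↦ if_pos hy) (if_pos hx)
    · exact .of_notMem_closure (by rwa [(isClosed_le hu hv).closure_eq])
  have ht : HasFDerivWithinAt (fun x ↦ if u x ≤ v x then f x else g x)
      (if u x ≤ v x then f' x else g' x) {y | v y ≤ u y} x := by
    have hgt : ∀ y, v y ≤ u y → (if u y ≤ v y then f y else g y) = g y := fun y hy ↦ by
      split_ifs with h
      exacts [hfg y (le_antisymm h hy), rfl]
    by_cases hx : v x ≤ u x
    · have hD : (if u x ≤ v x then f' x else g' x) = g' x := by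
        split_ifs with h
        exacts [hfg' x (le_antisymm h hx), rfl]
      rw [hD]
      exact (hg x hx).congr hgt (hgt x hx)
    · exact .of_notMem_closure (by rwa [(isClosed_le hv hu).closure_eq])
  have hcover : {y | u y ≤ v y} ∪ {y | v y ≤ u y} = univ :=
    eq_univ_of_forall fun y ↦ le_total (u y) (v y)
  simpa [hcover] using hs.union ht

end Gluing

section ConjugateExponents

variable {p q : ℝ}

lemma le_rpow_sub_one_of_rpow_le (hpq : p.HolderConjugate q) {u v : ℝ} (hu : 0 ≤ u) (hv : 0 ≤ v)
    (h : u ^ p ≤ v ^ q) : u ≤ v ^ (q - 1) := calc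
  u = (u ^ p) ^ p⁻¹ := (rpow_rpow_inv hu hpq.ne_zero).symm
  _ ≤ (v ^ q) ^ p⁻¹ := by have := hpq.inv_nonneg; gcongr
  _ = v ^ (q - 1) := by rw [← rpow_mul hv, ← div_eq_mul_inv, hpq.symm.div_conj_eq_sub_one]

lemma eq_rpow_sub_one_of_rpow_eq (hpq : p.HolderConjugate q) {u v : ℝ} (hu : 0 ≤ u) (hv : 0 ≤ v)
    (h : u ^ p = v ^ q) : u = v ^ (q - 1) := by
  rw [← rpow_rpow_inv hu hpq.ne_zero, h, ← rpow_mul hv, ← div_eq_mul_inv,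
    hpq.symm.div_conj_eq_sub_one]

lemma sq_mul_rpow_eq_of_rpow_eq (hpq : p.HolderConjugate q) {u v : ℝ} (hu : 0 ≤ u) (hv : 0 ≤ v)
    (h : u ^ p = v ^ q) : u ^ 2 * v ^ (2 - q) = 2 / p * u ^ p + (2 / q - 1) * v ^ q := by
  have hsum : 2 / p + 2 / q - 1 = 1 := by
    rw [div_eq_mul_inv, div_eq_mul_inv, ← mul_add, hpq.inv_add_inv_eq_one]; norm_num
  calc u ^ 2 * v ^ (2 - q) = v ^ ((q - 1) * 2 + (2 - q)) := by
        rw [eq_rpow_sub_one_of_rpow_eq hpq hu hv h, ← rpow_mul_natCast hv,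
          rpow_add' hv (by linarith [hpq.symm.pos]), Nat.cast_ofNat]
    _ = (2 / p + 2 / q - 1) * v ^ q := by rw [hsum]; ring_nf
    _ = 2 / p * u ^ p + (2 / q - 1) * v ^ q := by rw [h]; ring

end ConjugateExponents

section NormSqMulRpow

variable {F E : Type*} [NormedAddCommGroup F] [NormedAddCommGroup E] {r : ℝ}

lemma eq_zero_of_norm_fst_le_rpow (hr : r < 1) {x : F × E} (hx : ‖x.1‖ ≤ ‖x.2‖ ^ (1 - r))
    (h0 : x.2 = 0) : x = 0 := by
  rw [h0, norm_zero, zero_rpow (by linarith)] at hx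
  exact Prod.ext (norm_le_zero_iff.1 hx) h0

variable [InnerProductSpace ℝ F] [InnerProductSpace ℝ E]

noncomputable def innerSLProd (a : F) (b : E) : F × E →L[ℝ] ℝ :=
  (innerSL ℝ a).comp (ContinuousLinearMap.fst ℝ F E) +
    (innerSL ℝ b).comp (ContinuousLinearMap.snd ℝ F E)

@[simp]
lemma innerSLProd_apply (a : F) (b : E) (y : F × E) :
    innerSLProd a b y = inner ℝ a y.1 + inner ℝ b y.2 := by
  simp [innerSLProd]

@[simp]
lemma innerSLProd_zero : innerSLProd (0 : F) (0 : E) = 0 := by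
  ext y <;> simp

lemma norm_innerSLProd_le (a : F) (b : E) : ‖innerSLProd a b‖ ≤ ‖a‖ + ‖b‖ := by
  refine ContinuousLinearMap.opNorm_le_bound _ (by positivity) fun y ↦ ?_
  rw [innerSLProd_apply, add_mul]
  refine (abs_add_le _ _).trans (add_le_add ?_ ?_)
  · exact (abs_real_inner_le_norm _ _).trans (by gcongr; exact norm_fst_le y)
  · exact (abs_real_inner_le_norm _ _).trans (by gcongr; exact norm_snd_le y)

lemma continuous_innerSLProd : Continuous fun x : F × E ↦ innerSLProd x.1 x.2 := by
  unfold innerSLProd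
  fun_prop

theorem hasFDerivAt_norm_rpow_of_ne_zero {x : E} (hx : x ≠ 0) (r : ℝ) :
    HasFDerivAt (fun x : E ↦ ‖x‖ ^ r) ((r * ‖x‖ ^ (r - 2)) • innerSL ℝ x) x := by
  apply HasStrictFDerivAt.hasFDerivAt
  convert (hasStrictFDerivAt_norm_sq x).rpow_const (p := r / 2) (Or.inl (by simp [hx])) using 0
  simp_rw [← rpow_natCast_mul (norm_nonneg _), ← Nat.cast_smul_eq_nsmul ℝ, smul_smul]
  ring_nf

noncomputable def normSqMulRpowDeriv (r : ℝ) (x : F × E) : F × E →L[ℝ] ℝ :=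
  innerSLProd ((2 * ‖x.2‖ ^ r) • x.1) ((r * ‖x.1‖ ^ 2 * ‖x.2‖ ^ (r - 2)) • x.2)

lemma hasFDerivAt_normSqMulRpow {x : F × E} (hx : x.2 ≠ 0) :
    HasFDerivAt (fun x : F × E ↦ ‖x.1‖ ^ 2 * ‖x.2‖ ^ r) (normSqMulRpowDeriv r x) x := by
  have h1 := (hasStrictFDerivAt_norm_sq x.1).hasFDerivAt.comp x (hasFDerivAt_fst (p := x))
  have h2 := (hasFDerivAt_norm_rpow_of_ne_zero hx r).comp x (hasFDerivAt_snd (p := x))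
  refine (h1.mul h2).congr_fderiv ?_
  refine ContinuousLinearMap.ext fun y ↦ ?_
  simp only [Function.comp_apply, ContinuousLinearMap.smul_comp, add_apply, smul_apply,
    ContinuousLinearMap.comp_apply, ContinuousLinearMap.coe_snd', coe_innerSL_apply, smul_eq_mul,
    ContinuousLinearMap.coe_fst', nsmul_eq_mul, Nat.cast_ofNat, normSqMulRpowDeriv,
    innerSLProd_apply, real_inner_smul_left]
  ring

lemma hasFDerivAt_normSqMulRpow_zero (hr : 0 ≤ r) :
    HasFDerivAt (fun x : F × E ↦ ‖x.1‖ ^ 2 * ‖x.2‖ ^ r) (0 : F × E →L[ℝ] ℝ) 0 := by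
  rw [hasFDerivAt_iff_isLittleO_nhds_zero]
  refine IsBigO.trans_isLittleO ?_ (isLittleO_norm_pow_id one_lt_two)
  refine .of_bound' ?_
  filter_upwards [Metric.closedBall_mem_nhds (0 : F × E) one_pos] with y hy
  rw [mem_closedBall_zero_iff] at hy
  have h1 : ‖y.1‖ ^ 2 ≤ ‖y‖ ^ 2 := by gcongr; exact norm_fst_le y
  have h2 : ‖y.2‖ ^ r ≤ 1 := rpow_le_one (norm_nonneg _) ((norm_snd_le y).trans hy) hr
  simpa [abs_of_nonneg (rpow_nonneg (norm_nonneg y.2) r)] using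
    mul_le_mul h1 h2 (by positivity) (by positivity)

@[simp]
lemma normSqMulRpowDeriv_zero (r : ℝ) : normSqMulRpowDeriv r (0 : F × E) = 0 := by
  simp [normSqMulRpowDeriv]

lemma hasFDerivAt_normSqMulRpow_of_le (hr0 : 0 ≤ r) (hr1 : r < 1) {x : F × E}
    (hx : ‖x.1‖ ≤ ‖x.2‖ ^ (1 - r)) :
    HasFDerivAt (fun x : F × E ↦ ‖x.1‖ ^ 2 * ‖x.2‖ ^ r) (normSqMulRpowDeriv r x) x := by
  rcases eq_or_ne x.2 0 with h0 | h0
  · rw [eq_zero_of_norm_fst_le_rpow hr1 hx h0, normSqMulRpowDeriv_zero]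
    exact hasFDerivAt_normSqMulRpow_zero hr0
  · exact hasFDerivAt_normSqMulRpow h0

lemma norm_normSqMulRpowDeriv_le (hr0 : 0 ≤ r) (hr1 : r < 1) {x : F × E}
    (hx : ‖x.1‖ ≤ ‖x.2‖ ^ (1 - r)) :
    ‖normSqMulRpowDeriv r x‖ ≤ 2 * ‖x.2‖ + r * ‖x.1‖ := by
  rcases eq_or_ne x.2 0 with h0 | h0
  · rw [eq_zero_of_norm_fst_le_rpow hr1 hx h0, normSqMulRpowDeriv_zero,
      ContinuousLinearMap.opNorm_zero]
    simp
  set u := ‖x.1‖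
  set v := ‖x.2‖
  have hv : 0 < v := norm_pos_iff.2 h0
  have h1 : v ^ r * u ≤ v := calc
    v ^ r * u ≤ v ^ r * v ^ (1 - r) := by gcongr
    _ = v := by rw [← rpow_add hv]; norm_num
  have h2 : u * v ^ (r - 1) ≤ 1 := calc
    u * v ^ (r - 1) ≤ v ^ (1 - r) * v ^ (r - 1) := by gcongr
    _ = 1 := by rw [← rpow_add hv]; norm_num
  have h3 : v ^ (r - 2) * v = v ^ (r - 1) := by
    rw [← rpow_add_one hv.ne']; ring_nf
  calc ‖normSqMulRpowDeriv r x‖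
      ≤ ‖(2 * v ^ r) • x.1‖ + ‖(r * u ^ 2 * v ^ (r - 2)) • x.2‖ :=
        norm_innerSLProd_le _ _
    _ = 2 * (v ^ r * u) + r * u * (u * v ^ (r - 1)) := by
        rw [norm_smul, norm_smul, Real.norm_eq_abs, Real.norm_eq_abs, abs_of_nonneg (by positivity),
          abs_of_nonneg (by positivity), ← h3]
        ring
    _ ≤ 2 * v + r * u * 1 := by gcongr
    _ = 2 * v + r * u := by ring

lemma continuousOn_normSqMulRpowDeriv (hr0 : 0 ≤ r) (hr1 : r < 1) :
    ContinuousOn (normSqMulRpowDeriv r) {x : F × E | ‖x.1‖ ≤ ‖x.2‖ ^ (1 - r)} := by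
  intro x hx
  rcases eq_or_ne x.2 0 with h0 | h0
  · obtain rfl := eq_zero_of_norm_fst_le_rpow hr1 hx h0
    rw [ContinuousWithinAt, normSqMulRpowDeriv_zero]
    have hbound : Continuous fun y : F × E ↦ 2 * ‖y.2‖ + r * ‖y.1‖ := by fun_prop
    refine squeeze_zero_norm' (f := normSqMulRpowDeriv (F := F) (E := E) r)
      (a := fun y ↦ 2 * ‖y.2‖ + r * ‖y.1‖) ?_ ?_
    · filter_upwards [self_mem_nhdsWithin] with y hy using norm_normSqMulRpowDeriv_le hr0 hr1 hy
    · simpa using (hbound.tendsto 0).mono_left nhdsWithin_le_nhds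
  · have hv : ‖x.2‖ ≠ 0 := norm_ne_zero_iff.2 h0
    have hpow (s : ℝ) : ContinuousAt (fun y : F × E ↦ ‖y.2‖ ^ s) x :=
      continuousAt_snd.norm.rpow_const (.inl hv)
    have hcoef : ContinuousAt (fun y : F × E ↦
        ((2 * ‖y.2‖ ^ r) • y.1, (r * ‖y.1‖ ^ 2 * ‖y.2‖ ^ (r - 2)) • y.2)) x :=
      ((continuousAt_const.mul (hpow r)).smul continuousAt_fst).prodMk
        (((continuousAt_const.mul (continuousAt_fst.norm.pow 2)).mul (hpow (r - 2))).smul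
          continuousAt_snd)
    exact (continuous_innerSLProd.continuousAt.comp hcoef).continuousWithinAt

end NormSqMulRpow

section Bell

variable {F E : Type*} [NormedAddCommGroup F] [InnerProductSpace ℝ F]
  [NormedAddCommGroup E] [InnerProductSpace ℝ E] {p q : ℝ}

lemma hasFDerivAt_mul_norm_rpow_add_mul_norm_rpow (a b : ℝ) (hp : 1 < p) (hq : 1 < q)
    (x : F × E) :
    HasFDerivAt (fun x : F × E ↦ a * ‖x.1‖ ^ p + b * ‖x.2‖ ^ q)
      (innerSLProd ((a * p * ‖x.1‖ ^ (p - 2)) • x.1) ((b * q * ‖x.2‖ ^ (q - 2)) • x.2)) x := by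
  have h1 := (hasFDerivAt_norm_rpow x.1 hp).comp x (hasFDerivAt_fst (p := x))
  have h2 := (hasFDerivAt_norm_rpow x.2 hq).comp x (hasFDerivAt_snd (p := x))
  refine ((h1.const_mul a).add (h2.const_mul b)).congr_fderiv ?_
  refine ContinuousLinearMap.ext fun y ↦ ?_
  simp only [ContinuousLinearMap.smul_comp, add_apply, smul_apply, ContinuousLinearMap.comp_apply,
    ContinuousLinearMap.coe_fst', coe_innerSL_apply, smul_eq_mul, ContinuousLinearMap.coe_snd',
    innerSLProd_apply, real_inner_smul_left]
  ring

lemma normSqMulRpowDeriv_eq_of_rpow_eq (hpq : p.HolderConjugate q) {x : F × E}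
    (hx : ‖x.1‖ ^ p = ‖x.2‖ ^ q) :
    normSqMulRpowDeriv (2 - q) x = innerSLProd ((2 / p * p * ‖x.1‖ ^ (p - 2)) • x.1)
      (((2 / q - 1) * q * ‖x.2‖ ^ (q - 2)) • x.2) := by
  have hu := eq_rpow_sub_one_of_rpow_eq hpq (norm_nonneg _) (norm_nonneg _) hx
  rcases eq_or_ne x.2 0 with h0 | h0
  · have h1 : x.1 = 0 := by
      rwa [h0, norm_zero, zero_rpow (by linarith [hpq.symm.lt]), norm_eq_zero] at hu
    simp [normSqMulRpowDeriv, h0, h1]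
  have hv : 0 < ‖x.2‖ := norm_pos_iff.2 h0
  unfold normSqMulRpowDeriv
  congr 2
  · rw [hu, ← rpow_mul hv.le, div_mul_cancel₀ _ hpq.ne_zero]
    congr 2
    linear_combination -hpq.mul_eq_add
  · rw [hu, ← rpow_mul_natCast hv.le, mul_assoc, ← rpow_add hv, div_sub_one hpq.symm.ne_zero,
      div_mul_cancel₀ _ hpq.symm.ne_zero]
    congr 2
    push_cast
    ring

theorem contDiff_one_sq_mul_rpow_ite (hpq : p.HolderConjugate q) (hq : q ≤ 2) :
    ContDiff ℝ 1 fun x : F × E ↦ if ‖x.1‖ ^ p ≤ ‖x.2‖ ^ q then ‖x.1‖ ^ 2 * ‖x.2‖ ^ (2 - q)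
      else 2 / p * ‖x.1‖ ^ p + (2 / q - 1) * ‖x.2‖ ^ q := by
  have hp := hpq.lt
  have hq1 := hpq.symm.lt
  have hr0 : 0 ≤ 2 - q := by linarith
  have hr1 : 2 - q < 1 := by linarith
  have hregion (x : F × E) (hx : ‖x.1‖ ^ p ≤ ‖x.2‖ ^ q) : ‖x.1‖ ≤ ‖x.2‖ ^ (1 - (2 - q)) := by
    rw [show 1 - (2 - q) = q - 1 by ring]
    exact le_rpow_sub_one_of_rpow_le hpq (norm_nonneg _) (norm_nonneg _) hx
  have hB := hasFDerivAt_mul_norm_rpow_add_mul_norm_rpow (F := F) (E := E) (2 / p) (2 / q - 1)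
    hp hq1
  have hBC : ContDiff ℝ 1 fun x : F × E ↦ 2 / p * ‖x.1‖ ^ p + (2 / q - 1) * ‖x.2‖ ^ q :=
    (contDiff_const.mul ((contDiff_norm_rpow hp).comp contDiff_fst)).add
      (contDiff_const.mul ((contDiff_norm_rpow hq1).comp contDiff_snd))
  refine contDiff_one_if_le (continuous_fst.norm.rpow_const fun _ ↦ .inr hpq.nonneg)
    (continuous_snd.norm.rpow_const fun _ ↦ .inr hpq.symm.nonneg)
    (f' := normSqMulRpowDeriv (2 - q)) (g' := fderiv ℝ _) (fun x hx ↦ ?_)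
    (fun x _ ↦ (hBC.differentiable one_ne_zero x).hasFDerivAt.hasFDerivWithinAt)
    ((continuousOn_normSqMulRpowDeriv hr0 hr1).mono hregion)
    (hBC.continuous_fderiv one_ne_zero).continuousOn
    (fun x hx ↦ sq_mul_rpow_eq_of_rpow_eq hpq (norm_nonneg _) (norm_nonneg _) hx)
    (fun x hx ↦ ?_)
  · exact (hasFDerivAt_normSqMulRpow_of_le hr0 hr1 (hregion x hx)).hasFDerivWithinAt
  · rw [(hB x).fderiv]
    exact normSqMulRpowDeriv_eq_of_rpow_eq hpq hx

theorem contDiff_bell_norm (hp : 2 ≤ p) : ContDiff ℝ 1 fun x : F × E ↦ bell p ‖x.1‖ ‖x.2‖ := by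
  have hpq : p.HolderConjugate (p / (p - 1)) := .conjExponent (by linarith)
  have hq : p / (p - 1) ≤ 2 := by rw [div_le_iff₀ (by linarith)]; linarith
  convert (((contDiff_norm_rpow hpq.lt).comp contDiff_fst).add
    ((contDiff_norm_rpow hpq.symm.lt).comp contDiff_snd)).add
    (contDiff_const.mul (contDiff_one_sq_mul_rpow_ite (F := F) (E := E) hpq hq)) using 1
  funext x
  simp only [bell, rpow_two]
  split_ifs <;> rfl

end Bell

/-- For `p ≥ 2` the Nazarov–Treil Bellman function `Q` is of class `C¹`
on `ℝ × ℝⁿ`. -/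
theorem bellQ_contDiff_one (p : ℝ) (hp : 2 ≤ p) (n : ℕ) :
    ContDiff ℝ 1 (bellQ p n) :=
  contDiff_const.mul (contDiff_bell_norm hp)
end

section
/- Let p ≥ 2, q = p/(p−1), δ = q(q−1)/8 and n ∈ ℕ. The Nazarov–Treil Bellman function Q(ζ,η) = (1/2)β(|ζ|,|η|) is twice continuously differentiable on the open set {(ζ,η) ∈ ℝ × ℝⁿ : η ≠ 0 and |ζ|^p ≠ |η|^q}. -/
/-!
Off the singular set, `Q` agrees near each point with one of the two smooth branch formulas of
`β`; since the strict inequality between `|ζ|^p` and `|η|^q` persists nearby, it suffices that every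
term of those formulas is `C²`. Powers of `|η|` are smooth away from `η = 0`, and `|ζ|^p` is `C²` on
all of `ℝ` for `p ≥ 2`: its derivative `p |ζ|^(p-2) ζ` is `C¹`, being differentiable off `0` with a
derivative `p (p-1) |ζ|^(p-2)` that extends continuously to `0`.
-/

open Real Filter Topology

theorem hasDerivAt_abs_rpow_mul_self {r : ℝ} (hr : 0 ≤ r) (x : ℝ) :
    HasDerivAt (fun y : ℝ => |y| ^ r * y) ((r + 1) * |x| ^ r) x := by
  have hne : ∀ y ≠ 0, HasDerivAt (fun y : ℝ => |y| ^ r * y) ((r + 1) * |y| ^ r) y := by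
    intro y hy
    have hsign : (SignType.sign y : ℝ) * y = |y| := by
      rcases hy.lt_or_gt with h | h <;> simp [h, abs_of_neg, abs_of_pos]
    have hpow : |y| ^ (r - 1) * |y| = |y| ^ r := by
      rw [← rpow_add_one (abs_ne_zero.2 hy), sub_add_cancel]
    refine (((hasDerivAt_abs hy).rpow_const (Or.inl (abs_ne_zero.2 hy))).mul
      (hasDerivAt_id y)).congr_deriv ?_
    calc (SignType.sign y * r * |y| ^ (r - 1)) * id y + |y| ^ r * 1
        = r * (|y| ^ (r - 1) * (SignType.sign y * y)) + |y| ^ r := by simp only [id]; ring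
      _ = (r + 1) * |y| ^ r := by rw [hsign, hpow]; ring
  rcases eq_or_ne x 0 with rfl | hx
  · -- at `0` the derivative is obtained as the limit of the derivatives nearby
    exact hasDerivAt_of_hasDerivAt_of_ne hne
      ((continuous_abs.rpow_const fun _ => Or.inr hr).mul continuous_id).continuousAt
      (continuous_const.mul (continuous_abs.rpow_const fun _ => Or.inr hr)).continuousAt
  · exact hne x hx

theorem contDiff_abs_rpow {p : ℝ} (hp : 2 ≤ p) : ContDiff ℝ 2 fun x : ℝ => |x| ^ p := by
  have hderiv : deriv (fun x : ℝ => |x| ^ p) = fun x => p * (|x| ^ (p - 2) * x) := by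
    ext x
    rw [(hasDerivAt_abs_rpow x (by linarith)).deriv, mul_assoc]
  rw [show (2 : WithTop ℕ∞) = 1 + 1 from rfl, contDiff_succ_iff_deriv, hderiv,
    contDiff_one_iff_deriv]
  have hr : 0 ≤ p - 2 := by linarith
  refine ⟨fun x => (hasDerivAt_abs_rpow x (by linarith)).differentiableAt, by simp,
    fun x => ((hasDerivAt_abs_rpow_mul_self hr x).const_mul p).differentiableAt, ?_⟩
  rw [funext fun x => ((hasDerivAt_abs_rpow_mul_self hr x).const_mul p).deriv]
  exact continuous_const.mul (continuous_const.mul (continuous_abs.rpow_const fun _ => Or.inr hr))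

theorem contDiffAt_norm_snd_rpow {E F : Type*} [NormedAddCommGroup E] [NormedSpace ℝ E]
    [NormedAddCommGroup F] [InnerProductSpace ℝ F] {ξ : E × F} (hξ : ξ.2 ≠ 0) (r : ℝ) :
    ContDiffAt ℝ 2 (fun ξ : E × F => ‖ξ.2‖ ^ r) ξ :=
  (contDiffAt_snd.norm ℝ hξ).rpow_const_of_ne (norm_ne_zero_iff.2 hξ)

section BranchFormulas

variable {p : ℝ} {n : ℕ} {ξ : ℝ × EuclideanSpace ℝ (Fin n)}

theorem contDiffAt_bellQ_of_lt (hp : 2 ≤ p) (hη : ξ.2 ≠ 0)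
    (h : |ξ.1| ^ p < ‖ξ.2‖ ^ (p / (p - 1))) : ContDiffAt ℝ 2 (bellQ p n) ξ := by
  set q := p / (p - 1)
  have hζ : ContDiffAt ℝ 2 (fun ξ : ℝ × EuclideanSpace ℝ (Fin n) => |ξ.1| ^ p) ξ :=
    ((contDiff_abs_rpow hp).comp contDiff_fst).contDiffAt
  have hζ2 : ContDiffAt ℝ 2 (fun ξ : ℝ × EuclideanSpace ℝ (Fin n) => |ξ.1| ^ (2 : ℝ)) ξ :=
    ((contDiff_abs_rpow le_rfl).comp contDiff_fst).contDiffAt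
  have hq := contDiffAt_norm_snd_rpow hη q
  have hq2 := contDiffAt_norm_snd_rpow hη (2 - q)
  have hev : bellQ p n =ᶠ[𝓝 ξ] fun ξ => (1 / 2) * (|ξ.1| ^ p + ‖ξ.2‖ ^ q +
      q * (q - 1) / 8 * (|ξ.1| ^ (2 : ℝ) * ‖ξ.2‖ ^ (2 - q))) := by
    filter_upwards [hζ.continuousAt.eventually_lt hq.continuousAt h] with ξ' h'
    simp only [bellQ, bell, if_pos h'.le, q]
  exact ContDiffAt.congr_of_eventuallyEq (by fun_prop) hev

theorem contDiffAt_bellQ_of_gt (hp : 2 ≤ p) (hη : ξ.2 ≠ 0)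
    (h : ‖ξ.2‖ ^ (p / (p - 1)) < |ξ.1| ^ p) : ContDiffAt ℝ 2 (bellQ p n) ξ := by
  set q := p / (p - 1)
  have hζ : ContDiffAt ℝ 2 (fun ξ : ℝ × EuclideanSpace ℝ (Fin n) => |ξ.1| ^ p) ξ :=
    ((contDiff_abs_rpow hp).comp contDiff_fst).contDiffAt
  have hq := contDiffAt_norm_snd_rpow hη q
  have hev : bellQ p n =ᶠ[𝓝 ξ] fun ξ => (1 / 2) * (|ξ.1| ^ p + ‖ξ.2‖ ^ q +
      q * (q - 1) / 8 * ((2 / p) * |ξ.1| ^ p + (2 / q - 1) * ‖ξ.2‖ ^ q)) := by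
    filter_upwards [hq.continuousAt.eventually_lt hζ.continuousAt h] with ξ' h'
    simp only [bellQ, bell, if_neg (not_le.2 h'), q]
  exact ContDiffAt.congr_of_eventuallyEq (by fun_prop) hev

end BranchFormulas

/-- For `p ≥ 2`, `q = p/(p-1)`, the Nazarov–Treil Bellman function `Q`
is of class `C²` on the open set `{(ζ,η) : η ≠ 0 ∧ |ζ|^p ≠ |η|^q}`. -/
theorem bellQ_contDiffOn_two (p q : ℝ) (hp : 2 ≤ p) (hq : q = p / (p - 1)) (n : ℕ) :
    ContDiffOn ℝ 2 (bellQ p n)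
      {ξ : ℝ × EuclideanSpace ℝ (Fin n) | ξ.2 ≠ 0 ∧ |ξ.1| ^ p ≠ ‖ξ.2‖ ^ q} := by
  subst hq
  rintro ξ ⟨hη, hne⟩
  rcases hne.lt_or_gt with h | h
  · exact (contDiffAt_bellQ_of_lt hp hη h).contDiffWithinAt
  · exact (contDiffAt_bellQ_of_gt hp hη h).contDiffWithinAt
end

section
/- Let p ≥ 2, q = p/(p−1) and δ = q(q−1)/8. There exists a constant C > 0 depending only on p such that β is continuously differentiable on (0,∞)×(0,∞) and for every u, v > 0 one has 0 ≤ ∂_u β(u,v) ≤ C·max{u^{p−1}, v} and 0 ≤ ∂_v β(u,v) ≤ C·v^{q−1}. -/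
open Real

/-!
With `t = u^p / v^q` one has `β(u, v) = u^p + v^q + δ v^q h(t)`, where `h(t) = t^(2/p)` for
`t ≤ 1` and `h` follows its tangent line at `1` for `t ≥ 1`. The profile `h` is `C¹` on `(0, ∞)`,
hence so is `β`, and the perspective `y h(x/y)` has the explicit partial derivatives `h'(x/y)`
and `h(t) - t h'(t) = (1 - 2/p) min(t, 1)^(2/p)`. The only non-trivial bound is
`u^(p-1) t^(2/p-1) = u v^(2-q) ≤ v` on `{t ≤ 1}`, since there `u ≤ v^(q-1)`.
-/

open Set

noncomputable def capRpow (a t : ℝ) : ℝ :=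
  if t ≤ 1 then t ^ a else a * t + (1 - a)

section capRpow

variable (a : ℝ) {t : ℝ}

theorem capRpow_of_le (ht : t ≤ 1) : capRpow a t = t ^ a := if_pos ht

theorem capRpow_of_ge (ht : 1 ≤ t) : capRpow a t = a * t + (1 - a) := by
  rcases ht.eq_or_lt with rfl | ht
  · simp [capRpow]
  · exact if_neg ht.not_ge

theorem hasDerivAt_capRpow (ht : 0 < t) :
    HasDerivAt (capRpow a) (a * min t 1 ^ (a - 1)) t := by
  have hpow : HasDerivAt (· ^ a) (a * t ^ (a - 1)) t := hasDerivAt_rpow_const (.inl ht.ne')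
  have hlin : HasDerivAt (fun x => a * x + (1 - a)) a t := by
    simpa using ((hasDerivAt_id t).const_mul a).add_const (1 - a)
  rcases lt_trichotomy t 1 with h | rfl | h
  · rw [min_eq_left h.le]
    exact hpow.congr_of_eventuallyEq <|
      (eventually_le_nhds h).mono fun x hx => capRpow_of_le a hx
  · have hL : HasDerivWithinAt (capRpow a) a (Iic 1) 1 := by
      simpa using (hpow.hasDerivWithinAt (s := Iic 1)).congr
        (fun x hx => capRpow_of_le a hx) (capRpow_of_le a le_rfl)
    have hR : HasDerivWithinAt (capRpow a) a (Ici 1) 1 :=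
      hlin.hasDerivWithinAt.congr (fun x hx => capRpow_of_ge a hx) (capRpow_of_ge a le_rfl)
    simpa [Iic_union_Ici] using hL.union hR
  · rw [min_eq_right h.le, one_rpow, mul_one]
    exact hlin.congr_of_eventuallyEq <|
      (eventually_ge_nhds h).mono fun x hx => capRpow_of_ge a hx

theorem contDiffOn_capRpow : ContDiffOn ℝ 1 (capRpow a) (Ioi 0) := by
  rw [contDiffOn_one_iff_derivWithin (uniqueDiffOn_Ioi 0)]
  refine ⟨fun t ht => (hasDerivAt_capRpow a ht).differentiableAt.differentiableWithinAt, ?_⟩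
  have hderiv : ContinuousOn (fun t : ℝ => a * min t 1 ^ (a - 1)) (Ioi 0) :=
    continuousOn_const.mul <| (continuous_id.min continuous_const).continuousOn.rpow_const
      fun t (ht : 0 < t) => .inl (lt_min ht one_pos).ne'
  exact hderiv.congr fun t ht =>
    (hasDerivAt_capRpow a ht).hasDerivWithinAt.derivWithin (uniqueDiffOn_Ioi 0 t ht)

theorem capRpow_sub_mul_deriv (ht : 0 < t) :
    capRpow a t - t * (a * min t 1 ^ (a - 1)) = (1 - a) * min t 1 ^ a := by
  rcases le_total t 1 with h | h
  · rw [capRpow_of_le a h, min_eq_left h, rpow_sub_one ht.ne']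
    field_simp
  · rw [capRpow_of_ge a h, min_eq_right h]
    simp only [one_rpow]
    ring

end capRpow

noncomputable def capRpowPersp (a x y : ℝ) : ℝ := y * capRpow a (x / y)

section capRpowPersp

variable (a : ℝ) {x y : ℝ}

theorem contDiffOn_capRpowPersp :
    ContDiffOn ℝ 1 (fun z : ℝ × ℝ => capRpowPersp a z.1 z.2) (Ioi 0 ×ˢ Ioi 0) := by
  have hquot : ContDiffOn ℝ 1 (fun z : ℝ × ℝ => z.1 / z.2) (Ioi 0 ×ˢ Ioi 0) :=
    contDiffOn_fst.div contDiffOn_snd fun z hz => hz.2.ne'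
  exact contDiffOn_snd.mul <|
    (contDiffOn_capRpow a).comp hquot fun z hz => mem_Ioi.2 (div_pos hz.1 hz.2)

theorem hasDerivAt_capRpowPersp_left (hx : 0 < x) (hy : 0 < y) :
    HasDerivAt (fun x' => capRpowPersp a x' y) (a * min (x / y) 1 ^ (a - 1)) x := by
  have h := ((hasDerivAt_capRpow a (div_pos hx hy)).comp x
    ((hasDerivAt_id' x).div_const y)).const_mul y
  exact h.congr_deriv (by field_simp)

theorem hasDerivAt_capRpowPersp_right (hx : 0 < x) (hy : 0 < y) :
    HasDerivAt (fun y' => capRpowPersp a x y') ((1 - a) * min (x / y) 1 ^ a) y := by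
  have h := (hasDerivAt_id' y).mul ((hasDerivAt_capRpow a (div_pos hx hy)).comp y
    ((hasDerivAt_const y x).div (hasDerivAt_id' y) hy.ne'))
  rw [← capRpow_sub_mul_deriv a (div_pos hx hy)]
  exact h.congr_deriv (by simp only [Function.comp_apply]; field_simp; ring)

end capRpowPersp

section bell

variable {p q : ℝ} {u v : ℝ}

theorem bell_eq_capRpowPersp (hpq : p.HolderConjugate q) (hu : 0 < u) (hv : 0 < v) :
    bell p u v = u ^ p + v ^ q + q * (q - 1) / 8 * capRpowPersp (2 / p) (u ^ p) (v ^ q) := by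
  have hvq : 0 < v ^ q := rpow_pos_of_pos hv q
  have hqp : q / p = q - 1 := hpq.symm.div_conj_eq_sub_one
  have hp0 := hpq.ne_zero
  simp only [bell, ← hpq.conjugate_eq, capRpowPersp, capRpow, div_le_one hvq]
  split_ifs
  · rw [div_rpow (rpow_nonneg hu.le p) hvq.le, ← rpow_mul hu.le, ← rpow_mul hv.le,
      mul_div_cancel₀ _ hp0, show q * (2 / p) = q - (2 - q) by rw [mul_div_left_comm, hqp]; ring,
      rpow_sub hv q (2 - q)]
    field_simp
  · have h2q : 2 / q - 1 = 1 - 2 / p := by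
      have := hpq.inv_add_inv_eq_one
      rw [div_eq_mul_inv, div_eq_mul_inv]
      linarith
    rw [h2q]
    field_simp

theorem contDiffOn_bell (hpq : p.HolderConjugate q) :
    ContDiffOn ℝ 1 (fun uv : ℝ × ℝ => bell p uv.1 uv.2) (Ioi 0 ×ˢ Ioi 0) := by
  have hpow : ContDiffOn ℝ 1 (fun uv : ℝ × ℝ => (uv.1 ^ p, uv.2 ^ q)) (Ioi 0 ×ˢ Ioi 0) :=
    (contDiffOn_fst.rpow_const_of_ne fun uv huv => huv.1.ne').prodMk
      (contDiffOn_snd.rpow_const_of_ne fun uv huv => huv.2.ne')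
  have hmaps : MapsTo (fun uv : ℝ × ℝ => (uv.1 ^ p, uv.2 ^ q)) (Ioi 0 ×ˢ Ioi 0) (Ioi 0 ×ˢ Ioi 0) :=
    fun uv huv => ⟨rpow_pos_of_pos huv.1 p, rpow_pos_of_pos huv.2 q⟩
  have hformula : ContDiffOn ℝ 1 (fun uv : ℝ × ℝ => uv.1 ^ p + uv.2 ^ q +
      q * (q - 1) / 8 * capRpowPersp (2 / p) (uv.1 ^ p) (uv.2 ^ q)) (Ioi 0 ×ˢ Ioi 0) :=
    (hpow.fst.add hpow.snd).add (contDiffOn_const.mul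
      ((contDiffOn_capRpowPersp (2 / p)).comp hpow hmaps))
  exact hformula.congr fun uv huv => bell_eq_capRpowPersp hpq huv.1 huv.2

theorem hasDerivAt_bell_left (hpq : p.HolderConjugate q) (hu : 0 < u) (hv : 0 < v) :
    HasDerivAt (fun u' => bell p u' v)
      (p * u ^ (p - 1) + q * (q - 1) / 4 * (u ^ (p - 1) * min (u ^ p / v ^ q) 1 ^ (2 / p - 1)))
      u := by
  have hpow : HasDerivAt (· ^ p) (p * u ^ (p - 1)) u := hasDerivAt_rpow_const (.inl hu.ne')
  have h := (hpow.add_const (v ^ q)).add <| ((hasDerivAt_capRpowPersp_left (2 / p)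
    (rpow_pos_of_pos hu p) (rpow_pos_of_pos hv q)).comp u hpow).const_mul (q * (q - 1) / 8)
  refine (h.congr_of_eventuallyEq ?_).congr_deriv ?_
  · filter_upwards [Ioi_mem_nhds hu] with u' hu' using bell_eq_capRpowPersp hpq hu' hv
  · field_simp [hpq.ne_zero]
    ring

theorem hasDerivAt_bell_right (hpq : p.HolderConjugate q) (hu : 0 < u) (hv : 0 < v) :
    HasDerivAt (fun v' => bell p u v')
      (q * v ^ (q - 1) * (1 + q * (q - 1) / 8 * ((1 - 2 / p) * min (u ^ p / v ^ q) 1 ^ (2 / p))))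
      v := by
  have hpow : HasDerivAt (· ^ q) (q * v ^ (q - 1)) v := hasDerivAt_rpow_const (.inl hv.ne')
  have h := (hpow.const_add (u ^ p)).add <| ((hasDerivAt_capRpowPersp_right (2 / p)
    (rpow_pos_of_pos hu p) (rpow_pos_of_pos hv q)).comp v hpow).const_mul (q * (q - 1) / 8)
  refine (h.congr_of_eventuallyEq ?_).congr_deriv ?_
  · filter_upwards [Ioi_mem_nhds hv] with v' hv' using bell_eq_capRpowPersp hpq hu hv'
  · ring

end bell

theorem rpow_sub_one_mul_min_rpow_le_max {p q u v : ℝ} (hpq : p.HolderConjugate q)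
    (hu : 0 < u) (hv : 0 < v) :
    u ^ (p - 1) * min (u ^ p / v ^ q) 1 ^ (2 / p - 1) ≤ max (u ^ (p - 1)) v := by
  have hvq : 0 < v ^ q := rpow_pos_of_pos hv q
  have hqp : q / p = q - 1 := hpq.symm.div_conj_eq_sub_one
  have hp0 := hpq.ne_zero
  rcases le_total (u ^ p / v ^ q) 1 with h | h
  · have hle : u ≤ v ^ (q - 1) := by
      have := rpow_le_rpow (rpow_nonneg hu.le p) ((div_le_one hvq).1 h)
        (one_div_nonneg.2 hpq.nonneg)
      rwa [← rpow_mul hu.le, ← rpow_mul hv.le, mul_one_div_cancel hp0, rpow_one, mul_one_div,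
        hqp] at this
    have heq : u ^ (p - 1) * (u ^ p / v ^ q) ^ (2 / p - 1) = u * v ^ (2 - q) := by
      rw [div_rpow (rpow_nonneg hu.le p) hvq.le, ← rpow_mul hu.le, ← rpow_mul hv.le,
        show p * (2 / p - 1) = 2 - p by field_simp,
        show q * (2 / p - 1) = -(2 - q) by rw [mul_sub, mul_div_left_comm, hqp]; ring,
        rpow_neg hv.le, div_inv_eq_mul, ← mul_assoc, ← rpow_add hu]
      norm_num
    calc u ^ (p - 1) * min (u ^ p / v ^ q) 1 ^ (2 / p - 1) = u * v ^ (2 - q) := by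
          rw [min_eq_left h, heq]
      _ ≤ v ^ (q - 1) * v ^ (2 - q) := by gcongr
      _ = v := by rw [← rpow_add hv]; norm_num
      _ ≤ max (u ^ (p - 1)) v := le_max_right _ _
  · rw [min_eq_right h, one_rpow, mul_one]
    exact le_max_left _ _

/-- For `p ≥ 2`, `q = p/(p-1)`: there is `C = C(p) > 0` such that `β` is
`C¹` on `(0,∞) × (0,∞)` and for all `u, v > 0`,
`0 ≤ ∂_u β(u,v) ≤ C max{u^{p-1}, v}` and `0 ≤ ∂_v β(u,v) ≤ C v^{q-1}`. -/
theorem bell_partial_deriv_bounds (p q : ℝ) (hp : 2 ≤ p) (hq : q = p / (p - 1)) :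
    ∃ C > 0,
      ContDiffOn ℝ 1 (fun uv : ℝ × ℝ => bell p uv.1 uv.2) (Set.Ioi 0 ×ˢ Set.Ioi 0) ∧
      ∀ u > 0, ∀ v > 0,
        (0 ≤ deriv (fun u' => bell p u' v) u ∧
          deriv (fun u' => bell p u' v) u ≤ C * max (u ^ (p - 1)) v) ∧
        (0 ≤ deriv (fun v' => bell p u v') v ∧
          deriv (fun v' => bell p u v') v ≤ C * v ^ (q - 1)) := by
  have hpq : p.HolderConjugate q := (holderConjugate_iff_eq_conjExponent (by linarith)).2 hq
  have hq1 : 1 < q := hpq.symm.lt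
  have hq2 : q ≤ 2 := by rw [hq, div_le_iff₀ (by linarith)]; linarith
  refine ⟨p + 2, by linarith, contDiffOn_bell hpq, fun u hu v hv => ?_⟩
  rw [(hasDerivAt_bell_left hpq hu hv).deriv, (hasDerivAt_bell_right hpq hu hv).deriv]
  set m := min (u ^ p / v ^ q) 1
  have hm : 0 < m := lt_min (by positivity) one_pos
  have hA := rpow_sub_one_mul_min_rpow_le_max hpq hu hv
  have hA0 : 0 ≤ u ^ (p - 1) * m ^ (2 / p - 1) := by positivity
  have hu1 : u ^ (p - 1) ≤ max (u ^ (p - 1)) v := le_max_left _ _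
  have hB0 : 0 ≤ 1 - 2 / p := by rw [sub_nonneg, div_le_one (by linarith)]; exact hp
  have hB1 : (1 - 2 / p) * m ^ (2 / p) ≤ 1 :=
    mul_le_one₀ (by linarith [show 0 ≤ 2 / p by positivity]) (by positivity)
      (rpow_le_one hm.le (min_le_right _ _) (by positivity))
  have hδ0 : 0 ≤ q * (q - 1) := by nlinarith
  have hδ1 : q * (q - 1) ≤ 2 := by nlinarith
  have hδB : q * (q - 1) / 8 * ((1 - 2 / p) * m ^ (2 / p)) ≤ 1 := by
    nlinarith [mul_le_mul hδ1 hB1 (by positivity) (by norm_num)]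
  have hv1 : 0 < v ^ (q - 1) := by positivity
  refine ⟨⟨by positivity, by nlinarith⟩, ⟨by positivity, ?_⟩⟩
  calc q * v ^ (q - 1) * (1 + q * (q - 1) / 8 * ((1 - 2 / p) * m ^ (2 / p)))
      ≤ 2 * v ^ (q - 1) * (1 + 1) := by gcongr
    _ ≤ (p + 2) * v ^ (q - 1) := by nlinarith
end

section
/- Let p ≥ 2, q = p/(p−1), δ = q(q−1)/8, n ∈ ℕ and κ ∈ (0,1). The mollified Bellman function Q_κ = ψ_κ * Q is infinitely differentiable on ℝ × ℝⁿ ≅ ℝ^{n+1}, and for every (ζ,η) ∈ ℝ × ℝⁿ one has 0 ≤ Q_κ(ζ,η) ≤ ((1+δ)/2)·((|ζ|+κ)^p + (|η|+κ)^q). -/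
open Real MeasureTheory

/-- The Euclidean norm on `ℝ × ℝⁿ ≅ ℝ^{n+1}`. -/
noncomputable def eNorm (n : ℕ) (x : ℝ × EuclideanSpace ℝ (Fin n)) : ℝ :=
  Real.sqrt (x.1 ^ 2 + ‖x.2‖ ^ 2)

/-- The mollifier `ψ(x) = c e^{-1/(1-|x|²)}` for `|x| < 1`, `ψ(x) = 0` otherwise,
where `|·|` is the Euclidean norm of `ℝ^{n+1} ≅ ℝ × ℝⁿ`. -/
noncomputable def moll (n : ℕ) (c : ℝ) (x : ℝ × EuclideanSpace ℝ (Fin n)) : ℝ :=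
  if eNorm n x < 1 then c * Real.exp (-(1 / (1 - eNorm n x ^ 2))) else 0

/-- The rescaled mollifier `ψ_κ(x) = κ^{-(n+1)} ψ(x/κ)`. -/
noncomputable def mollScaled (n : ℕ) (c κ : ℝ) (x : ℝ × EuclideanSpace ℝ (Fin n)) : ℝ :=
  (κ ^ (n + 1))⁻¹ * moll n c (κ⁻¹ • x)

/-- The mollified Bellman function `Q_κ = ψ_κ * Q` (convolution on `ℝ^{n+1} ≅ ℝ × ℝⁿ`). -/
noncomputable def bellQκ (p : ℝ) (n : ℕ) (c κ : ℝ)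
    (ξ : ℝ × EuclideanSpace ℝ (Fin n)) : ℝ :=
  ∫ y, mollScaled n c κ y * bellQ p n (ξ - y)

/-- The Hessian quadratic form `H_Φ(ω; x) = ⟨Hess Φ(ω) x, x⟩`, realised as the second
iterated Fréchet derivative evaluated at `(x, x)`. -/
noncomputable def hessQF {E : Type*} [NormedAddCommGroup E] [NormedSpace ℝ E]
    (Φ : E → ℝ) (ω : E) (x : E) : ℝ :=
  iteratedFDeriv ℝ 2 Φ ω ![x, x]

-- basic eNorm lemmas
lemma eNorm_nonneg' (n : ℕ) (x : ℝ × EuclideanSpace ℝ (Fin n)) : 0 ≤ eNorm n x :=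
  Real.sqrt_nonneg _

lemma sq_eNorm (n : ℕ) (x : ℝ × EuclideanSpace ℝ (Fin n)) :
    eNorm n x ^ 2 = x.1 ^ 2 + ‖x.2‖ ^ 2 :=
  Real.sq_sqrt (by positivity)

lemma abs_fst_le_eNorm (n : ℕ) (x : ℝ × EuclideanSpace ℝ (Fin n)) : |x.1| ≤ eNorm n x := by
  rw [← Real.sqrt_sq_eq_abs]
  exact Real.sqrt_le_sqrt (le_add_of_nonneg_right (sq_nonneg _))

lemma norm_snd_le_eNorm (n : ℕ) (x : ℝ × EuclideanSpace ℝ (Fin n)) : ‖x.2‖ ≤ eNorm n x := by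
  have : ‖x.2‖ = Real.sqrt (‖x.2‖ ^ 2) := by rw [Real.sqrt_sq (norm_nonneg _)]
  rw [this]
  exact Real.sqrt_le_sqrt (le_add_of_nonneg_left (sq_nonneg _))

lemma eNorm_smul (n : ℕ) (a : ℝ) (x : ℝ × EuclideanSpace ℝ (Fin n)) :
    eNorm n (a • x) = |a| * eNorm n x := by
  unfold eNorm
  have h1 : (a • x).1 = a * x.1 := rfl
  have h2 : ‖(a • x).2‖ = |a| * ‖x.2‖ := by
    rw [Prod.smul_snd, norm_smul, Real.norm_eq_abs]
  rw [h1, h2, mul_pow, mul_pow, sq_abs, ← mul_add, Real.sqrt_mul (sq_nonneg a),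
    Real.sqrt_sq_eq_abs]

example : True := trivial

lemma moll_eq (n : ℕ) (c : ℝ) (x : ℝ × EuclideanSpace ℝ (Fin n)) :
    moll n c x = c * expNegInvGlue (1 - (x.1 ^ 2 + ‖x.2‖ ^ 2)) := by
  unfold moll
  rw [← sq_eNorm]
  by_cases h : eNorm n x < 1
  · rw [if_pos h]
    have h2 : eNorm n x ^ 2 < 1 := by nlinarith [eNorm_nonneg' n x]
    rw [expNegInvGlue, if_neg (by linarith), one_div]
  · rw [if_neg h]
    push_neg at h
    have h2 : (1:ℝ) ≤ eNorm n x ^ 2 := by nlinarith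
    rw [expNegInvGlue, if_pos (by linarith), mul_zero]

lemma moll_contDiff (n : ℕ) (c : ℝ) : ContDiff ℝ (⊤ : ℕ∞) (moll n c) := by
  have : moll n c = fun x : ℝ × EuclideanSpace ℝ (Fin n) =>
      c * expNegInvGlue (1 - (x.1 ^ 2 + ‖x.2‖ ^ 2)) := funext (moll_eq n c)
  rw [this]
  apply ContDiff.mul contDiff_const
  apply expNegInvGlue.contDiff.comp
  exact ContDiff.sub contDiff_const
    (ContDiff.add (contDiff_fst.pow 2) ((contDiff_norm_sq ℝ).comp contDiff_snd))

lemma moll_nonneg (n : ℕ) {c : ℝ} (hc : 0 ≤ c) (x : ℝ × EuclideanSpace ℝ (Fin n)) :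
    0 ≤ moll n c x := by
  unfold moll
  split
  · exact mul_nonneg hc (Real.exp_pos _).le
  · exact le_refl 0

lemma moll_zero (n : ℕ) (c : ℝ) {x : ℝ × EuclideanSpace ℝ (Fin n)} (h : 1 ≤ eNorm n x) :
    moll n c x = 0 := if_neg (not_lt.2 h)

lemma mollScaled_contDiff (n : ℕ) (c : ℝ) (κ : ℝ) :
    ContDiff ℝ (⊤ : ℕ∞) (mollScaled n c κ) := by
  apply ContDiff.mul contDiff_const
  exact (moll_contDiff n c).comp (contDiff_const_smul κ⁻¹)

lemma mollScaled_nonneg (n : ℕ) {c κ : ℝ} (hc : 0 ≤ c) (hκ : 0 < κ)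
    (x : ℝ × EuclideanSpace ℝ (Fin n)) : 0 ≤ mollScaled n c κ x :=
  mul_nonneg (by positivity) (moll_nonneg n hc _)

lemma mollScaled_zero (n : ℕ) (c : ℝ) {κ : ℝ} (hκ : 0 < κ)
    {x : ℝ × EuclideanSpace ℝ (Fin n)} (h : κ ≤ eNorm n x) : mollScaled n c κ x = 0 := by
  unfold mollScaled
  rw [moll_zero n c, mul_zero]
  rw [eNorm_smul, abs_of_pos (inv_pos.2 hκ)]
  rw [← inv_mul_cancel₀ hκ.ne']
  exact mul_le_mul_of_nonneg_left h (by positivity)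

lemma mollScaled_hcs (n : ℕ) (c : ℝ) {κ : ℝ} (hκ : 0 < κ) :
    HasCompactSupport (mollScaled n c κ) := by
  apply HasCompactSupport.intro (K := Set.Icc (-κ) κ ×ˢ Metric.closedBall 0 κ)
    (isCompact_Icc.prod (isCompact_closedBall 0 κ))
  intro x hx
  apply mollScaled_zero n c hκ
  simp only [Set.mem_prod, Set.mem_Icc, Metric.mem_closedBall, dist_zero_right, not_and_or,
    not_le] at hx
  rcases hx with hx | hx
  · have : κ ≤ |x.1| := by
      rcases hx with h | h
      · rw [abs_of_nonpos (by linarith)]; linarith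
      · rw [abs_of_pos (by linarith)]; linarith
    exact this.trans (abs_fst_le_eNorm n x)
  · exact le_trans hx.le (norm_snd_le_eNorm n x)

section bellLemmas
variable {p : ℝ} (hp : 2 ≤ p)

include hp

lemma p_facts : 0 < p - 1 ∧ 0 < p ∧ 1 < p / (p - 1) ∧ p / (p - 1) ≤ 2 := by
  have h1 : 0 < p - 1 := by linarith
  refine ⟨h1, by linarith, ?_, ?_⟩
  · rw [lt_div_iff₀ h1]; linarith
  · rw [div_le_iff₀ h1]; linarith

lemma bell_nonneg {u v : ℝ} (hu : 0 ≤ u) (hv : 0 ≤ v) : 0 ≤ bell p u v := by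
  unfold bell
  obtain ⟨h1, h2, h3, h4⟩ := p_facts hp
  set q := p / (p - 1) with hqdef
  have hq0 : 0 < q := by linarith
  have hup : 0 ≤ u ^ p := Real.rpow_nonneg hu p
  have hvq : 0 ≤ v ^ q := Real.rpow_nonneg hv q
  have hu2 : 0 ≤ u ^ (2:ℝ) := Real.rpow_nonneg hu 2
  have hv2q : 0 ≤ v ^ (2 - q) := Real.rpow_nonneg hv _
  have hδ : 0 ≤ q * (q - 1) / 8 := by nlinarith
  have h2p : 0 ≤ 2 / p := by positivity
  have h2q : 0 ≤ 2 / q - 1 := by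
    rw [sub_nonneg, le_div_iff₀ hq0]; linarith
  split
  · have := mul_nonneg hδ (mul_nonneg hu2 hv2q)
    linarith
  · have := mul_nonneg hδ (add_nonneg (mul_nonneg h2p hup) (mul_nonneg h2q hvq))
    linarith

/-- the key exponent identity -/
lemma q_mul_two_div_p : (p / (p - 1)) * (2 / p) = 2 * (p / (p - 1)) - 2 := by
  obtain ⟨h1, h2, _, _⟩ := p_facts hp
  field_simp
  ring

lemma bell_boundary {u v : ℝ} (hu : 0 ≤ u) (hv : 0 ≤ v)
    (h : u ^ p = v ^ (p / (p - 1))) :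
    u ^ (2:ℝ) * v ^ (2 - p / (p - 1)) =
      (2 / p) * u ^ p + (2 / (p / (p - 1)) - 1) * v ^ (p / (p - 1)) := by
  obtain ⟨h1, h2, h3, h4⟩ := p_facts hp
  set q := p / (p - 1) with hqdef
  have hq0 : 0 < q := by linarith
  rcases eq_or_lt_of_le hv with hv0 | hv0
  · -- v = 0
    have hv0 : v = 0 := hv0.symm
    subst hv0
    have h0 : u ^ p = 0 := by rw [h, Real.zero_rpow hq0.ne']
    have hu0 : u = 0 := (Real.rpow_eq_zero hu h2.ne').mp h0
    subst hu0
    rw [Real.zero_rpow (two_ne_zero), Real.zero_rpow hq0.ne', h0, zero_mul, mul_zero, mul_zero,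
      add_zero]
  · -- v > 0
    have e1 : q * (2 / p) + (2 - q) = q := by
      have h5 := q_mul_two_div_p hp
      rw [← hqdef] at h5
      linarith
    have key : u ^ (2:ℝ) = v ^ (q * (2 / p)) := by
      have e2 : u ^ (2:ℝ) = (u ^ p) ^ (2 / p) := by
        rw [← Real.rpow_mul hu, mul_div_cancel₀ _ h2.ne']
      rw [e2, h, ← Real.rpow_mul hv]
    rw [key, ← Real.rpow_add hv0, e1, h]
    have h2q : 2 / q - 1 = (p - 2) / p := by
      rw [hqdef]
      field_simp
      ring
    rw [h2q]
    field_simp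
    ring

lemma bell_le {u v : ℝ} (hu : 0 ≤ u) (hv : 0 ≤ v) :
    bell p u v ≤ (1 + (p / (p - 1)) * (p / (p - 1) - 1) / 8) *
      (u ^ p + v ^ (p / (p - 1))) := by
  unfold bell
  obtain ⟨h1, h2, h3, h4⟩ := p_facts hp
  set q := p / (p - 1) with hqdef
  have hq0 : 0 < q := by linarith
  have hup : 0 ≤ u ^ p := Real.rpow_nonneg hu p
  have hvq : 0 ≤ v ^ q := Real.rpow_nonneg hv q
  have hδ : 0 ≤ q * (q - 1) / 8 := by nlinarith
  split
  · rename_i hle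
    -- key : u ^ 2 * v ^ (2 - q) ≤ v ^ q
    have key : u ^ (2:ℝ) * v ^ (2 - q) ≤ v ^ q := by
      rcases eq_or_lt_of_le hv with hv0 | hv0
      · have hv0 : v = 0 := hv0.symm
        subst hv0
        have h0 : u ^ p = 0 :=
          le_antisymm (by rwa [Real.zero_rpow hq0.ne'] at hle) hup
        have hu0 : u = 0 := (Real.rpow_eq_zero hu h2.ne').mp h0
        subst hu0
        rw [Real.zero_rpow (two_ne_zero), zero_mul]
        exact Real.rpow_nonneg le_rfl q
      · have e1 : q * (2 / p) + (2 - q) = q := by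
          have h5 := q_mul_two_div_p hp
          rw [← hqdef] at h5
          linarith
        have e2 : u ^ (2:ℝ) = (u ^ p) ^ (2 / p) := by
          rw [← Real.rpow_mul hu, mul_div_cancel₀ _ h2.ne']
        have e3 : (u ^ p) ^ (2 / p) ≤ (v ^ q) ^ (2 / p) :=
          Real.rpow_le_rpow hup hle (by positivity)
        have e4 : (v ^ q) ^ (2 / p) = v ^ (q * (2 / p)) := by
          rw [← Real.rpow_mul hv]
        calc u ^ (2:ℝ) * v ^ (2 - q) ≤ v ^ (q * (2 / p)) * v ^ (2 - q) := by
              apply mul_le_mul_of_nonneg_right _ (Real.rpow_nonneg hv _)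
              rw [e2, ← e4]
              exact e3
          _ = v ^ q := by rw [← Real.rpow_add hv0, e1]
    nlinarith
  · have e1 : 2 / p ≤ 1 := by
      rw [div_le_one h2]; linarith
    have e2 : 2 / q - 1 ≤ 1 := by
      have : 1 ≤ 2 / q := by rw [le_div_iff₀ hq0]; linarith
      have : 2 / q ≤ 2 := by rw [div_le_iff₀ hq0]; linarith
      linarith
    have e3 : (2 / p) * u ^ p + (2 / q - 1) * v ^ q ≤ u ^ p + v ^ q := by
      have := mul_le_of_le_one_left hup e1
      have := mul_le_of_le_one_left hvq e2
      linarith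
    nlinarith

end bellLemmas

lemma continuous_rpow_const {X : Type*} [TopologicalSpace X] {f : X → ℝ} (hf : Continuous f)
    {e : ℝ} (he : 0 ≤ e) : Continuous fun x => f x ^ e :=
  continuous_iff_continuousAt.2 fun x =>
    (Real.continuousAt_rpow_const _ _ (Or.inr he)).comp hf.continuousAt

lemma bellQ_continuous {p : ℝ} (hp : 2 ≤ p) (n : ℕ) : Continuous (bellQ p n) := by
  obtain ⟨h1, h2, h3, h4⟩ := p_facts hp
  have hq0 : (0:ℝ) < p / (p - 1) := by linarith
  have hu : Continuous fun ξ : ℝ × EuclideanSpace ℝ (Fin n) => |ξ.1| :=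
    continuous_abs.comp continuous_fst
  have hv : Continuous fun ξ : ℝ × EuclideanSpace ℝ (Fin n) => ‖ξ.2‖ :=
    continuous_norm.comp continuous_snd
  unfold bellQ bell
  apply continuous_const.mul
  apply Continuous.if_le
  · apply Continuous.add
    apply Continuous.add (continuous_rpow_const hu h2.le) (continuous_rpow_const hv hq0.le)
    exact continuous_const.mul
      ((continuous_rpow_const hu (by norm_num)).mul
        (continuous_rpow_const hv (by linarith)))
  · apply Continuous.add
    apply Continuous.add (continuous_rpow_const hu h2.le) (continuous_rpow_const hv hq0.le)
    exact continuous_const.mul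
      ((continuous_const.mul (continuous_rpow_const hu h2.le)).add
        (continuous_const.mul (continuous_rpow_const hv hq0.le)))
  · exact continuous_rpow_const hu h2.le
  · exact continuous_rpow_const hv hq0.le
  · intro ξ hξ
    have := bell_boundary hp (abs_nonneg ξ.1) (norm_nonneg ξ.2) hξ
    rw [this]


instance (n : ℕ) : (volume : Measure (ℝ × EuclideanSpace ℝ (Fin n))).IsAddHaarMeasure :=
  inferInstanceAs (((volume : Measure ℝ).prod volume).IsAddHaarMeasure)

instance (n : ℕ) : (volume : Measure (ℝ × EuclideanSpace ℝ (Fin n))).Regular :=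
  MeasureTheory.Measure.Regular.of_sigmaCompactSpace_of_isLocallyFiniteMeasure _

instance (n : ℕ) : (volume : Measure (ℝ × EuclideanSpace ℝ (Fin n))).IsNegInvariant :=
  Measure.IsAddHaarMeasure.isNegInvariant_of_regular volume

lemma bellQ_nonneg {p : ℝ} (hp : 2 ≤ p) (n : ℕ) (ξ : ℝ × EuclideanSpace ℝ (Fin n)) :
    0 ≤ bellQ p n ξ :=
  mul_nonneg (by norm_num) (bell_nonneg hp (abs_nonneg _) (norm_nonneg _))


/-- For `p ≥ 2`, `q = p/(p-1)`, `δ = q(q-1)/8` and `κ ∈ (0,1)`, the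
mollified Bellman function `Q_κ = ψ_κ * Q` is `C^∞` on `ℝ × ℝⁿ` and satisfies
`0 ≤ Q_κ(ζ,η) ≤ ((1+δ)/2)((|ζ|+κ)^p + (|η|+κ)^q)`. -/
theorem bellQκ_smooth_and_size (p q δ : ℝ) (hp : 2 ≤ p) (hq : q = p / (p - 1))
    (hδ : δ = q * (q - 1) / 8) (n : ℕ) (c : ℝ) (hc : 0 < c)
    (hnorm : ∫ x : ℝ × EuclideanSpace ℝ (Fin n), moll n c x = 1)
    (κ : ℝ) (hκ : κ ∈ Set.Ioo (0 : ℝ) 1) :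
    ContDiff ℝ (⊤ : ℕ∞) (bellQκ p n c κ) ∧
    ∀ ξ : ℝ × EuclideanSpace ℝ (Fin n),
      0 ≤ bellQκ p n c κ ξ ∧
      bellQκ p n c κ ξ ≤ (1 + δ) / 2 * ((|ξ.1| + κ) ^ p + (‖ξ.2‖ + κ) ^ q) := by
  obtain ⟨hκ0, hκ1⟩ := hκ
  obtain ⟨h1, h2, h3, h4⟩ := p_facts hp
  have hq1 : 1 < q := hq ▸ h3
  have hδ0 : 0 ≤ δ := by rw [hδ]; nlinarith
  have hQc : Continuous (bellQ p n) := bellQ_continuous hp n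
  have hQli : LocallyIntegrable (bellQ p n) volume := hQc.locallyIntegrable
  have hψs : ContDiff ℝ (⊤ : ℕ∞) (mollScaled n c κ) := mollScaled_contDiff n c κ
  have hψcs : HasCompactSupport (mollScaled n c κ) := mollScaled_hcs n c hκ0
  constructor
  · have hconv : bellQκ p n c κ =
        MeasureTheory.convolution (mollScaled n c κ) (bellQ p n)
          (ContinuousLinearMap.lsmul ℝ ℝ) volume := rfl
    rw [hconv]
    exact hψcs.contDiff_convolution_left _ hψs hQli
  · intro ξ
    -- integral of the scaled mollifier is 1
    have hψint : ∫ y, mollScaled n c κ y = 1 := by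
      unfold mollScaled
      rw [integral_const_mul,
        Measure.integral_comp_inv_smul_of_nonneg volume (moll n c) hκ0.le, hnorm, smul_eq_mul,
        mul_one]
      have hfr : Module.finrank ℝ (ℝ × EuclideanSpace ℝ (Fin n)) = 1 + n := by
        simp [Module.finrank_prod, finrank_euclideanSpace]
      rw [hfr, add_comm 1 n, inv_mul_cancel₀ (pow_ne_zero _ hκ0.ne')]
    constructor
    · exact integral_nonneg fun y =>
        mul_nonneg (mollScaled_nonneg n hc.le hκ0 y) (bellQ_nonneg hp n _)
    · set M := (1 + δ) / 2 * ((|ξ.1| + κ) ^ p + (‖ξ.2‖ + κ) ^ q) with hM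
      have hMnn : 0 ≤ M := by
        have := Real.rpow_nonneg (add_nonneg (abs_nonneg ξ.1) hκ0.le) p
        have := Real.rpow_nonneg (add_nonneg (norm_nonneg ξ.2) hκ0.le) q
        have h5 : (0:ℝ) ≤ (1 + δ) / 2 := by linarith
        exact mul_nonneg h5 (by linarith)
      have hpt : ∀ y, mollScaled n c κ y * bellQ p n (ξ - y) ≤ mollScaled n c κ y * M := by
        intro y
        rcases lt_or_ge (eNorm n y) κ with hy | hy
        · apply mul_le_mul_of_nonneg_left _ (mollScaled_nonneg n hc.le hκ0 y)
          have hy1 : |y.1| < κ := lt_of_le_of_lt (abs_fst_le_eNorm n y) hy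
          have hy2 : ‖y.2‖ < κ := lt_of_le_of_lt (norm_snd_le_eNorm n y) hy
          have b1 : |(ξ - y).1| ≤ |ξ.1| + κ := by
            have h5 : (ξ - y).1 = ξ.1 - y.1 := rfl
            rw [h5]
            have := abs_sub_abs_le_abs_sub ξ.1 y.1
            calc |ξ.1 - y.1| ≤ |ξ.1| + |y.1| := abs_sub ξ.1 y.1
              _ ≤ |ξ.1| + κ := by linarith
          have b2 : ‖(ξ - y).2‖ ≤ ‖ξ.2‖ + κ := by
            have : (ξ - y).2 = ξ.2 - y.2 := rfl
            rw [this]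
            exact (norm_sub_le _ _).trans (by linarith)
          have m1 : |(ξ - y).1| ^ p ≤ (|ξ.1| + κ) ^ p :=
            Real.rpow_le_rpow (abs_nonneg _) b1 h2.le
          have m2 : ‖(ξ - y).2‖ ^ (p / (p - 1)) ≤ (‖ξ.2‖ + κ) ^ (p / (p - 1)) :=
            Real.rpow_le_rpow (norm_nonneg _) b2 (by linarith)
          have hble := bell_le hp (abs_nonneg (ξ - y).1) (norm_nonneg (ξ - y).2)
          have hδq : (1 : ℝ) + (p / (p - 1)) * (p / (p - 1) - 1) / 8 = 1 + δ := by
            rw [hδ, hq]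
          rw [hδq] at hble
          unfold bellQ
          rw [hM, hq]
          calc (1:ℝ)/2 * bell p |(ξ - y).1| ‖(ξ - y).2‖
              ≤ 1/2 * ((1 + δ) * (|(ξ - y).1| ^ p + ‖(ξ - y).2‖ ^ (p / (p - 1)))) := by
                linarith
            _ ≤ (1 + δ) / 2 * ((|ξ.1| + κ) ^ p + (‖ξ.2‖ + κ) ^ (p / (p - 1))) := by
                nlinarith [Real.rpow_nonneg (abs_nonneg (ξ - y).1) p,
                  Real.rpow_nonneg (norm_nonneg (ξ - y).2) (p / (p - 1))]
        · rw [mollScaled_zero n c hκ0 hy, zero_mul, zero_mul]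
      have hfc : Continuous fun y => mollScaled n c κ y * bellQ p n (ξ - y) :=
        (hψs.continuous).mul (hQc.comp (continuous_const.sub continuous_id))
      have hfcs : HasCompactSupport fun y => mollScaled n c κ y * bellQ p n (ξ - y) :=
        hψcs.mul_right
      have hfint : Integrable fun y => mollScaled n c κ y * bellQ p n (ξ - y) :=
        hfc.integrable_of_hasCompactSupport hfcs
      have hψint' : Integrable (mollScaled n c κ) :=
        hψs.continuous.integrable_of_hasCompactSupport hψcs
      calc bellQκ p n c κ ξ ≤ ∫ y, mollScaled n c κ y * M :=
            integral_mono hfint (hψint'.mul_const M) hpt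
        _ = M := by rw [integral_mul_const, hψint, one_mul]
end

section
/- For every q ∈ (1,2], the constant C_q = ((8 + q(q−1))/4) · (q−1)^{1/q − 1} satisfies C_q < 3. -/
/-!
Write `t = q - 1` and `b = 1/q - 1 ≤ 0`, so that `C_q = (8 + q t)/4 · exp (b log t)`. The rational
function `m t = (5t+1)(t-1)/(2t(t+2))` bounds `log` from below on `(0, ∞)`: `log - m` has derivative
`(t-1)³/(t²(t+2)²)`, so it is minimal, and zero, at `t = 1`. Together with `exp c ≤ (1 - c)⁻¹` this
gives `C_q ≤ (8 + q t)/4 · (1 - b m t)⁻¹`, and `b m t = -(5q-4)(q-2)/(2q(q+1))` has cancelled the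
logarithmic singularity, so `C_q < 3` reduces to the quartic inequality `q⁴ - 35q² + 80q - 48 < 0`
on `[1, 2]`.
-/

open Real

noncomputable def logMinorant (x : ℝ) : ℝ := (5 * x + 1) * (x - 1) / (2 * x * (x + 2))

theorem hasDerivAt_log_sub_logMinorant {x : ℝ} (hx : 0 < x) :
    HasDerivAt (fun y => log y - logMinorant y) ((x - 1) ^ 3 / (x ^ 2 * (x + 2) ^ 2)) x := by
  have hnum : HasDerivAt (fun y => (5 * y + 1) * (y - 1)) (5 * (x - 1) + (5 * x + 1) * 1) x :=
    (((hasDerivAt_id' x).const_mul 5).add_const 1).mul ((hasDerivAt_id' x).sub_const 1)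
      |>.congr_deriv (by ring)
  have hden : HasDerivAt (fun y => 2 * y * (y + 2)) (2 * (x + 2) + 2 * x) x :=
    ((hasDerivAt_id' x).const_mul 2).mul ((hasDerivAt_id' x).add_const 2) |>.congr_deriv (by ring)
  refine ((hasDerivAt_log hx.ne').sub (hnum.div hden (by positivity))).congr_deriv ?_
  field_simp
  ring

theorem logMinorant_le_log {x : ℝ} (hx : 0 < x) : logMinorant x ≤ log x := by
  set f := fun y => log y - logMinorant y
  have hderiv {y : ℝ} (hy : 0 < y) := hasDerivAt_log_sub_logMinorant hy
  have hcont : ContinuousOn f (Set.Ioi 0) := fun y hy =>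
    (hderiv hy).continuousAt.continuousWithinAt
  have hdiff : DifferentiableOn ℝ f (Set.Ioi 0) := fun y hy =>
    (hderiv hy).differentiableAt.differentiableWithinAt
  have hf1 : f 1 = 0 := by simp [f, logMinorant]
  suffices 0 ≤ f x by simpa [f, sub_nonneg] using this
  rcases le_total x 1 with hx1 | hx1
  · have hanti : AntitoneOn f (Set.Ioc 0 1) := by
      refine antitoneOn_of_deriv_nonpos (convex_Ioc 0 1) (hcont.mono Set.Ioc_subset_Ioi_self)
        (hdiff.mono (interior_subset.trans Set.Ioc_subset_Ioi_self)) fun y hy => ?_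
      rw [interior_Ioc] at hy
      rw [(hderiv hy.1).deriv]
      exact div_nonpos_of_nonpos_of_nonneg
        ((Odd.pow_nonpos_iff (by decide)).2 (by linarith [hy.2])) (by positivity)
    exact hf1 ▸ hanti ⟨hx, hx1⟩ ⟨one_pos, le_rfl⟩ hx1
  · have hIci : Set.Ici (1 : ℝ) ⊆ Set.Ioi 0 := Set.Ici_subset_Ioi.2 one_pos
    have hmono : MonotoneOn f (Set.Ici 1) := by
      refine monotoneOn_of_deriv_nonneg (convex_Ici 1) (hcont.mono hIci)
        (hdiff.mono (interior_subset.trans hIci)) fun y hy => ?_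
      rw [interior_Ici] at hy
      have hy1 : (0 : ℝ) ≤ y - 1 := sub_nonneg.2 (le_of_lt hy)
      rw [(hderiv (hIci (Set.mem_Ici.2 (le_of_lt hy)))).deriv]
      positivity
    exact hf1 ▸ hmono Set.self_mem_Ici hx1 hx1

theorem rpow_le_inv_one_sub_mul_logMinorant {t b : ℝ} (ht : 0 < t) (hb : b ≤ 0)
    (hpos : 0 < 1 - b * logMinorant t) : t ^ b ≤ (1 - b * logMinorant t)⁻¹ := by
  have hexp : exp (b * logMinorant t) ≤ (1 - b * logMinorant t)⁻¹ := by
    rw [le_inv_comm₀ (exp_pos _) hpos, ← exp_neg]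
    exact one_sub_le_exp_neg _
  calc t ^ b = exp (b * log t) := by rw [rpow_def_of_pos ht, mul_comm]
    _ ≤ exp (b * logMinorant t) :=
      exp_le_exp.2 (mul_le_mul_of_nonpos_left (logMinorant_le_log ht) hb)
    _ ≤ _ := hexp

theorem quartic_neg {q : ℝ} (hq1 : 1 ≤ q) (hq2 : q ≤ 2) : q ^ 4 - 35 * q ^ 2 + 80 * q - 48 < 0 := by
  nlinarith [mul_nonneg (mul_nonneg (sub_nonneg.2 hq1) (sub_nonneg.2 hq1)) (sub_nonneg.2 hq2),
    sq_nonneg (q - 5 / 4), mul_nonneg (sub_nonneg.2 hq1) (sq_nonneg (q - 5 / 4))]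

theorem one_sub_mul_logMinorant_sub_one {q : ℝ} (hq : 1 < q) :
    1 - (1 / q - 1) * logMinorant (q - 1) = 1 + (5 * q - 4) * (q - 2) / (2 * q * (q + 1)) := by
  have : q - 1 ≠ 0 := sub_ne_zero.2 hq.ne'
  have : q ≠ 0 := by positivity
  have : q + 1 ≠ 0 := by positivity
  rw [logMinorant, show q - 1 + 2 = q + 1 by ring]
  field_simp
  ring

/-- For every `q ∈ (1,2]`, the constant
`C_q = ((8+q(q-1))/4) (q-1)^{1/q-1}` satisfies `C_q < 3`. -/
theorem Cq_lt_three (q : ℝ) (hq : q ∈ Set.Ioc (1 : ℝ) 2) :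
    (8 + q * (q - 1)) / 4 * (q - 1) ^ (1 / q - 1) < 3 := by
  obtain ⟨hq1, hq2⟩ := hq
  have hq0 : 0 < q := by linarith
  set D := 1 - (1 / q - 1) * logMinorant (q - 1) with hD_def
  have hD : (8 + q * (q - 1)) / 4 < 3 * D := by
    rw [hD_def, one_sub_mul_logMinorant_sub_one hq1, div_lt_iff₀ (by norm_num), ← sub_pos]
    field_simp
    nlinarith [quartic_neg hq1.le hq2]
  have hD0 : 0 < D := by
    have : 0 < (8 + q * (q - 1)) / 4 := by nlinarith
    linarith
  have hb : 1 / q - 1 ≤ 0 := by rw [sub_nonpos, div_le_one hq0]; exact hq1.le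
  calc (8 + q * (q - 1)) / 4 * (q - 1) ^ (1 / q - 1)
      ≤ (8 + q * (q - 1)) / 4 * D⁻¹ := by
        gcongr
        exact rpow_le_inv_one_sub_mul_logMinorant (sub_pos.2 hq1) hb hD0
    _ < 3 := by rwa [← div_eq_mul_inv, div_lt_iff₀ hD0]
end
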